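/- Let U and W be irreducible T-modules. A linear map σ : U → W is an isomorphism of Q-modules if and only if σ is a quasi-isomorphism of T-modules, i.e., a linear bijection satisfying σL = Lσ, σF = Fσ, σR = Rσ on U, and σ E*_i = E*_{i+n} σ for all i ∈ ℤ, where n = r(W) − r(U). -/

import Mathlib

open Matrix BigOperators

noncomputable section

variable {X : Type*} [Fintype X] [DecidableEq X]

/-- The adjacency matrix of a graph, over ℂ. -/
def adjMat (G : SimpleGraph X) [DecidableRel G.Adj] : Matrix X X ℂ :=
  Matrix.of fun y z => if G.Adj y z then 1 else 0

/-- The dual idempotent `E*_i`: diagonal 0-1 matrix projecting onto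
vertices at distance `i` from `x` (zero for `i` outside the distance range). -/
def Estar (G : SimpleGraph X) (x : X) (i : ℤ) : Matrix X X ℂ :=
  Matrix.diagonal fun y => if (G.dist x y : ℤ) = i then 1 else 0

/-- The lowering matrix `L = Σ_{i=1}^D E*_{i-1} A E*_i`. -/
def lowerM (G : SimpleGraph X) [DecidableRel G.Adj] (x : X) (D : ℕ) : Matrix X X ℂ :=
  ∑ i ∈ Finset.Icc 1 D, Estar G x ((i : ℤ) - 1) * adjMat G * Estar G x i

/-- The flat matrix `F = Σ_{i=0}^D E*_i A E*_i`. -/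
def flatM (G : SimpleGraph X) [DecidableRel G.Adj] (x : X) (D : ℕ) : Matrix X X ℂ :=
  ∑ i ∈ Finset.range (D + 1), Estar G x i * adjMat G * Estar G x i

/-- The raising matrix `R = Σ_{i=0}^{D-1} E*_{i+1} A E*_i`. -/
def raiseM (G : SimpleGraph X) [DecidableRel G.Adj] (x : X) (D : ℕ) : Matrix X X ℂ :=
  ∑ i ∈ Finset.range D, Estar G x ((i : ℤ) + 1) * adjMat G * Estar G x i

/-- The subconstituent (Terwilliger) algebra `T`, generated by `A` and the `E*_i`. -/
def Talg (G : SimpleGraph X) [DecidableRel G.Adj] (x : X) (D : ℕ) :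
    Subalgebra ℂ (Matrix X X ℂ) :=
  Algebra.adjoin ℂ (insert (adjMat G) (Estar G x '' Set.Icc (0 : ℤ) (D : ℤ)))

/-- The quantum adjacency algebra `Q`, generated by `L, F, R`. -/
def Qalg (G : SimpleGraph X) [DecidableRel G.Adj] (x : X) (D : ℕ) :
    Subalgebra ℂ (Matrix X X ℂ) :=
  Algebra.adjoin ℂ {lowerM G x D, flatM G x D, raiseM G x D}

/-- The dual adjacency algebra `M*`, the span of the `E*_i`. -/
def Mstar (G : SimpleGraph X) (x : X) (D : ℕ) : Submodule ℂ (Matrix X X ℂ) :=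
  Submodule.span ℂ (Estar G x '' Set.Icc (0 : ℤ) (D : ℤ))

/-- The graded component `T_n = Σ_i E*_{i+n} T E*_i`. -/
def Tgraded (G : SimpleGraph X) [DecidableRel G.Adj] (x : X) (D : ℕ) (n : ℤ) :
    Submodule ℂ (Matrix X X ℂ) :=
  Submodule.span ℂ
    {M | ∃ i : ℤ, ∃ S ∈ Talg G x D, M = Estar G x (i + n) * S * Estar G x i}

/-- The graded component `Q_n = Q ∩ T_n`. -/
def Qgraded (G : SimpleGraph X) [DecidableRel G.Adj] (x : X) (D : ℕ) (n : ℤ) :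
    Submodule ℂ (Matrix X X ℂ) :=
  (Subalgebra.toSubmodule (Qalg G x D)) ⊓ Tgraded G x D n

/-- `W` is an irreducible module for the algebra `A₀ ⊆ Mat_X(ℂ)` (acting on `V = ℂ^X`
by matrix-vector multiplication). -/
def IsIrredMod (A₀ : Subalgebra ℂ (Matrix X X ℂ)) (W : Submodule ℂ (X → ℂ)) : Prop :=
  (∀ S ∈ A₀, ∀ w ∈ W, S.mulVec w ∈ W) ∧ W ≠ ⊥ ∧
    ∀ W' : Submodule ℂ (X → ℂ), W' ≤ W →
      (∀ S ∈ A₀, ∀ w ∈ W', S.mulVec w ∈ W') → W' = ⊥ ∨ W' = W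

/-- The subspace `E*_i W`. -/
def Emap (G : SimpleGraph X) (x : X) (i : ℤ) (W : Submodule ℂ (X → ℂ)) :
    Submodule ℂ (X → ℂ) :=
  W.map (Estar G x i).mulVecLin

/-- The subspace `P · W` spanned by all `S w`, `S ∈ P`, `w ∈ W`. -/
def actSp (P : Submodule ℂ (Matrix X X ℂ)) (W : Submodule ℂ (X → ℂ)) :
    Submodule ℂ (X → ℂ) :=
  Submodule.span ℂ {v | ∃ S ∈ P, ∃ w ∈ W, v = S.mulVec w}

/-- The statement: `W` has endpoint `r` and diameter `d`, i.e. `E*_i W ≠ 0`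
iff `r ≤ i ≤ r + d`. -/
def HasEndpointDiam (G : SimpleGraph X) (x : X) (W : Submodule ℂ (X → ℂ))
    (r d : ℕ) : Prop :=
  ∀ i : ℤ, Emap G x i W ≠ ⊥ ↔ ((r : ℤ) ≤ i ∧ i ≤ (r : ℤ) + (d : ℤ))

/-- `σ` restricts to an isomorphism of `Q`-modules from `U` to `W`. -/
def IsQIso (G : SimpleGraph X) [DecidableRel G.Adj] (x : X) (D : ℕ)
    (U W : Submodule ℂ (X → ℂ)) (σ : (X → ℂ) →ₗ[ℂ] (X → ℂ)) : Prop :=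
  U.map σ = W ∧ (∀ u ∈ U, σ u = 0 → u = 0) ∧
    ∀ S ∈ Qalg G x D, ∀ u ∈ U, σ (S.mulVec u) = S.mulVec (σ u)

/-- `σ` restricts to an isomorphism of `T`-modules from `U` to `W`. -/
def IsTIso (G : SimpleGraph X) [DecidableRel G.Adj] (x : X) (D : ℕ)
    (U W : Submodule ℂ (X → ℂ)) (σ : (X → ℂ) →ₗ[ℂ] (X → ℂ)) : Prop :=
  U.map σ = W ∧ (∀ u ∈ U, σ u = 0 → u = 0) ∧
    ∀ S ∈ Talg G x D, ∀ u ∈ U, σ (S.mulVec u) = S.mulVec (σ u)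

/-- `σ` restricts to a quasi-isomorphism of `T`-modules from `U` to `W`,
with endpoint shift `n`. -/
def IsQuasiIso (G : SimpleGraph X) [DecidableRel G.Adj] (x : X) (D : ℕ)
    (U W : Submodule ℂ (X → ℂ)) (σ : (X → ℂ) →ₗ[ℂ] (X → ℂ)) (n : ℤ) : Prop :=
  U.map σ = W ∧ (∀ u ∈ U, σ u = 0 → u = 0) ∧
    (∀ u ∈ U, σ ((lowerM G x D).mulVec u) = (lowerM G x D).mulVec (σ u)) ∧
    (∀ u ∈ U, σ ((flatM G x D).mulVec u) = (flatM G x D).mulVec (σ u)) ∧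
    (∀ u ∈ U, σ ((raiseM G x D).mulVec u) = (raiseM G x D).mulVec (σ u)) ∧
    ∀ i : ℤ, ∀ u ∈ U, σ ((Estar G x i).mulVec u) = (Estar G x (i + n)).mulVec (σ u)

end

/-!
The algebra `Q` is graded by `Q_n = Q ∩ Σ_i E*_{i+n} T E*_i` (the generators `L, F, R` have
degrees `-1, 0, 1`), and the homogeneous components of an element of `Q` again lie in `Q`.
Hence every nonzero homogeneous vector of an irreducible `T`-module `U` generates `U` over `Q`,
and if `r` is the endpoint of `U`, then `E*_r U` consists exactly of the vectors of `U` killed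
by every `Q_n` with `n < 0`. This description only involves the `Q`-action, so a
`Q`-isomorphism `σ : U → W` maps a nonzero `u₀ ∈ E*_r U` into `E*_{r'} W`. Writing `u = p u₀`
with `p ∈ Q`, the vector `E*_i u` is the degree `i - r` component of `p` applied to `u₀`, and `σ`
carries it to the same component applied to `σ u₀`, which is `E*_{i + r' - r} σ u`.
Conversely, a map commuting with `L, F, R` commutes with the algebra they generate.
-/

section Terwilliger

open Finset

variable {X : Type*} [DecidableEq X] (G : SimpleGraph X) (x : X) {D : ℕ}

theorem Estar_eq_zero (hD : ∀ y, G.dist x y ≤ D) {i : ℤ} (hi : i < 0 ∨ D < i) :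
    Estar G x i = 0 := by
  rw [Estar, ← diagonal_zero]
  congr 1
  funext y
  have hy := hD y
  rw [if_neg (by omega)]

theorem sum_range_Estar (hD : ∀ y, G.dist x y ≤ D) :
    ∑ i ∈ range (D + 1), Estar G x i = 1 := by
  ext y z
  by_cases h : y = z
  · simp [Estar, Matrix.sum_apply, h, one_apply, Nat.lt_succ_of_le (hD z)]
  · simp [Estar, Matrix.sum_apply, h, one_apply]

variable [Fintype X]

theorem mulVec_mem_of_mem_adjoin {s : Set (Matrix X X ℂ)} {N : Submodule ℂ (X → ℂ)}
    (hs : ∀ S ∈ s, ∀ v ∈ N, S *ᵥ v ∈ N) {S : Matrix X X ℂ} (hS : S ∈ Algebra.adjoin ℂ s) :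
    ∀ v ∈ N, S *ᵥ v ∈ N := by
  induction hS using Algebra.adjoin_induction with
  | mem a ha => exact hs a ha
  | algebraMap c =>
    intro v hv
    rw [Algebra.algebraMap_eq_smul_one, smul_mulVec, one_mulVec]
    exact N.smul_mem c hv
  | add a b _ _ ha hb => exact fun v hv => add_mulVec a b v ▸ N.add_mem (ha v hv) (hb v hv)
  | mul a b _ _ ha hb => exact fun v hv => mulVec_mulVec v a b ▸ ha _ (hb v hv)

theorem map_mulVec_of_mem_adjoin {s : Set (Matrix X X ℂ)} {U : Submodule ℂ (X → ℂ)}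
    (σ : (X → ℂ) →ₗ[ℂ] (X → ℂ)) (hU : ∀ S ∈ Algebra.adjoin ℂ s, ∀ u ∈ U, S *ᵥ u ∈ U)
    (hσ : ∀ S ∈ s, ∀ u ∈ U, σ (S *ᵥ u) = S *ᵥ σ u) {S : Matrix X X ℂ}
    (hS : S ∈ Algebra.adjoin ℂ s) : ∀ u ∈ U, σ (S *ᵥ u) = S *ᵥ σ u := by
  induction hS using Algebra.adjoin_induction with
  | mem a ha => exact hσ a ha
  | algebraMap c =>
    intro u _
    rw [Algebra.algebraMap_eq_smul_one, smul_mulVec, one_mulVec, smul_mulVec, one_mulVec,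
      map_smul]
  | add a b _ _ ha hb =>
    intro u hu
    rw [add_mulVec, map_add, ha u hu, hb u hu, add_mulVec]
  | mul a b _ hb ha' hb' =>
    intro u hu
    rw [← mulVec_mulVec, ha' _ (hU b hb u hu), hb' u hu, mulVec_mulVec]

theorem Estar_mul_Estar (i j : ℤ) :
    Estar G x i * Estar G x j = if i = j then Estar G x i else 0 := by
  rw [Estar, Estar, diagonal_mul_diagonal]
  split_ifs with h
  · subst h
    congr 1
    funext y
    split_ifs <;> simp
  · rw [← diagonal_zero]
    congr 1
    funext y
    split_ifs <;> simp_all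

theorem Estar_mulVec_Estar_mulVec (i j : ℤ) (v : X → ℂ) :
    Estar G x i *ᵥ (Estar G x j *ᵥ v) = if i = j then Estar G x i *ᵥ v else 0 := by
  rw [mulVec_mulVec, Estar_mul_Estar]
  split_ifs <;> simp

theorem exists_Estar_mulVec_ne_zero {v : X → ℂ} (hv : v ≠ 0) :
    ∃ i, Estar G x i *ᵥ v ≠ 0 := by
  obtain ⟨y, hy⟩ := Function.ne_iff.1 hv
  refine ⟨G.dist x y, fun h => hy ?_⟩
  simpa [Estar, mulVec_diagonal] using congrFun h y

def IsEndpoint (W : Submodule ℂ (X → ℂ)) (r : ℤ) : Prop :=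
  Emap G x r W ≠ ⊥ ∧ ∀ i, Emap G x i W ≠ ⊥ → r ≤ i

theorem HasEndpointDiam.isEndpoint {W : Submodule ℂ (X → ℂ)} {r d : ℕ}
    (h : HasEndpointDiam G x W r d) : IsEndpoint G x W r :=
  ⟨(h r).2 ⟨le_rfl, by omega⟩, fun i hi => ((h i).1 hi).1⟩

variable [DecidableRel G.Adj]

theorem Estar_mul_adjMat_mul_Estar_apply (a b : ℤ) (y z : X) :
    (Estar G x a * adjMat G * Estar G x b) y z =
      if (G.dist x y : ℤ) = a ∧ (G.dist x z : ℤ) = b then adjMat G y z else 0 := by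
  simp only [Estar, mul_diagonal, diagonal_mul]
  split_ifs <;> simp_all

theorem adjMat_eq_lowerM_add_flatM_add_raiseM (hD : ∀ y, G.dist x y ≤ D) :
    adjMat G = lowerM G x D + flatM G x D + raiseM G x D := by
  ext y z
  simp only [Matrix.add_apply, lowerM, flatM, raiseM, Matrix.sum_apply,
    Estar_mul_adjMat_mul_Estar_apply]
  by_cases hyz : G.Adj y z
  · have hyz_dist := hyz.diff_dist_adj (u := x)
    have hy := hD y
    have hz := hD z
    rw [sum_eq_single (G.dist x z), sum_eq_single (G.dist x z), sum_eq_single (G.dist x z)]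
    · rw [show adjMat G y z = 1 from if_pos hyz]
      split_ifs <;> norm_num <;> omega
    all_goals
      simp only [mem_range, mem_Icc]
      intros
      rw [if_neg (by omega)]
  · simp [adjMat, hyz]

theorem Estar_mem_Talg (hD : ∀ y, G.dist x y ≤ D) (i : ℤ) : Estar G x i ∈ Talg G x D := by
  by_cases hi : 0 ≤ i ∧ i ≤ D
  · exact Algebra.subset_adjoin (Set.mem_insert_of_mem _ ⟨i, hi, rfl⟩)
  · rw [Estar_eq_zero G x hD (by omega)]
    exact zero_mem _

theorem adjMat_mem_Talg : adjMat G ∈ Talg G x D :=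
  Algebra.subset_adjoin (Set.mem_insert _ _)

theorem Estar_mul_adjMat_mul_Estar_mem_Talg (hD : ∀ y, G.dist x y ≤ D) (i j : ℤ) :
    Estar G x i * adjMat G * Estar G x j ∈ Talg G x D :=
  mul_mem (mul_mem (Estar_mem_Talg G x hD i) (adjMat_mem_Talg G x)) (Estar_mem_Talg G x hD j)

theorem lowerM_mem_Qalg : lowerM G x D ∈ Qalg G x D :=
  Algebra.subset_adjoin (by simp)

theorem flatM_mem_Qalg : flatM G x D ∈ Qalg G x D :=
  Algebra.subset_adjoin (by simp)

theorem raiseM_mem_Qalg : raiseM G x D ∈ Qalg G x D :=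
  Algebra.subset_adjoin (by simp)

theorem adjMat_mem_Qalg (hD : ∀ y, G.dist x y ≤ D) : adjMat G ∈ Qalg G x D := by
  rw [adjMat_eq_lowerM_add_flatM_add_raiseM G x hD]
  exact add_mem (add_mem (lowerM_mem_Qalg G x) (flatM_mem_Qalg G x)) (raiseM_mem_Qalg G x)

theorem Qalg_le_Talg (hD : ∀ y, G.dist x y ≤ D) : Qalg G x D ≤ Talg G x D := by
  refine Algebra.adjoin_le ?_
  rintro S (rfl | rfl | rfl) <;>
    exact sum_mem fun i _ => Estar_mul_adjMat_mul_Estar_mem_Talg G x hD _ _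

theorem Estar_mul_eq_mul_Estar_of_mem_Tgraded {n : ℤ} {S : Matrix X X ℂ}
    (hS : S ∈ Tgraded G x D n) (j : ℤ) :
    Estar G x (j + n) * S = S * Estar G x j := by
  induction hS using Submodule.span_induction with
  | mem M hM =>
    obtain ⟨i, M, -, rfl⟩ := hM
    simp only [← mul_assoc, Estar_mul_Estar]
    rw [mul_assoc (_ * M), Estar_mul_Estar]
    by_cases h : i = j
    · simp [h]
    · simp [h, show j + n ≠ i + n by omega]
  | zero => simp
  | add a b _ _ ha hb => rw [mul_add, add_mul, ha, hb]
  | smul c a _ ha => rw [mul_smul_comm, smul_mul_assoc, ha]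

theorem Estar_mulVec_mulVec_of_mem_Tgraded {n : ℤ} {S : Matrix X X ℂ}
    (hS : S ∈ Tgraded G x D n) (j : ℤ) (v : X → ℂ) :
    Estar G x (j + n) *ᵥ (S *ᵥ v) = S *ᵥ (Estar G x j *ᵥ v) := by
  rw [mulVec_mulVec, mulVec_mulVec, Estar_mul_eq_mul_Estar_of_mem_Tgraded G x hS]

theorem mem_Tgraded_iff (hD : ∀ y, G.dist x y ≤ D) {n : ℤ} {S : Matrix X X ℂ} :
    S ∈ Tgraded G x D n ↔
      S ∈ Talg G x D ∧ ∀ j, Estar G x (j + n) * S = S * Estar G x j := by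
  refine ⟨fun hS => ⟨?_, Estar_mul_eq_mul_Estar_of_mem_Tgraded G x hS⟩, fun ⟨hST, hS⟩ => ?_⟩
  · refine (Submodule.span_le (p := Subalgebra.toSubmodule (Talg G x D))).2 ?_ hS
    rintro _ ⟨i, M, hM, rfl⟩
    exact (Subalgebra.mem_toSubmodule _).2 <|
      mul_mem (mul_mem (Estar_mem_Talg G x hD _) hM) (Estar_mem_Talg G x hD _)
  · have hsum : S = ∑ j ∈ range (D + 1), Estar G x (j + n) * S * Estar G x j := by
      simp only [hS, mul_assoc, Estar_mul_Estar, if_true, ← mul_sum]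
      rw [sum_range_Estar G x hD, mul_one]
    rw [hsum]
    exact sum_mem fun j _ => Submodule.subset_span ⟨j, S, hST, rfl⟩

theorem mul_mem_Qgraded (hD : ∀ y, G.dist x y ≤ D) {m n : ℤ} {a b : Matrix X X ℂ}
    (ha : a ∈ Qgraded G x D m) (hb : b ∈ Qgraded G x D n) :
    a * b ∈ Qgraded G x D (m + n) := by
  obtain ⟨haQ, haT⟩ := Submodule.mem_inf.1 ha
  obtain ⟨hbQ, hbT⟩ := Submodule.mem_inf.1 hb
  rw [mem_Tgraded_iff G x hD] at haT hbT
  refine Submodule.mem_inf.2 ⟨(Qalg G x D).mul_mem haQ hbQ, (mem_Tgraded_iff G x hD).2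
    ⟨mul_mem haT.1 hbT.1, fun j => ?_⟩⟩
  rw [← add_assoc, ← mul_assoc, add_right_comm, haT.2, mul_assoc, hbT.2, mul_assoc]

theorem one_mem_Qgraded (hD : ∀ y, G.dist x y ≤ D) : 1 ∈ Qgraded G x D 0 :=
  Submodule.mem_inf.2 ⟨(Qalg G x D).one_mem, (mem_Tgraded_iff G x hD).2 ⟨one_mem _, by simp⟩⟩

theorem Estar_mul_adjMat_mul_Estar_mem_Tgraded (i n : ℤ) :
    Estar G x (i + n) * adjMat G * Estar G x i ∈ Tgraded G x D n :=
  Submodule.subset_span ⟨i, adjMat G, adjMat_mem_Talg G x, rfl⟩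

theorem lowerM_mem_Qgraded : lowerM G x D ∈ Qgraded G x D (-1) :=
  Submodule.mem_inf.2 ⟨lowerM_mem_Qalg G x, sum_mem fun i _ => by
    simpa only [sub_eq_add_neg] using Estar_mul_adjMat_mul_Estar_mem_Tgraded G x i (-1)⟩

theorem flatM_mem_Qgraded : flatM G x D ∈ Qgraded G x D 0 :=
  Submodule.mem_inf.2 ⟨flatM_mem_Qalg G x, sum_mem fun i _ => by
    simpa only [add_zero] using Estar_mul_adjMat_mul_Estar_mem_Tgraded G x i 0⟩

theorem raiseM_mem_Qgraded : raiseM G x D ∈ Qgraded G x D 1 :=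
  Submodule.mem_inf.2 ⟨raiseM_mem_Qalg G x, sum_mem fun i _ =>
    Estar_mul_adjMat_mul_Estar_mem_Tgraded G x i 1⟩

theorem Qalg_le_iSup_Qgraded (hD : ∀ y, G.dist x y ≤ D) :
    Subalgebra.toSubmodule (Qalg G x D) ≤ ⨆ n, Qgraded G x D n := by
  have hmul : (⨆ n, Qgraded G x D n) * (⨆ n, Qgraded G x D n) ≤ ⨆ n, Qgraded G x D n := by
    simp only [Submodule.iSup_mul, Submodule.mul_iSup]
    exact iSup_le fun _ => iSup_le fun _ => Submodule.mul_le.2 fun _ ha _ hb =>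
      Submodule.mem_iSup_of_mem _ (mul_mem_Qgraded G x hD ha hb)
  let P := (⨆ n, Qgraded G x D n).toSubalgebra
    (Submodule.mem_iSup_of_mem 0 (one_mem_Qgraded G x hD))
    (fun a b ha hb => hmul (Submodule.mul_mem_mul ha hb))
  have hQP : Qalg G x D ≤ P := by
    refine Algebra.adjoin_le ?_
    rintro S (rfl | rfl | rfl)
    · exact Submodule.mem_iSup_of_mem _ (lowerM_mem_Qgraded G x)
    · exact Submodule.mem_iSup_of_mem _ (flatM_mem_Qgraded G x)
    · exact Submodule.mem_iSup_of_mem _ (raiseM_mem_Qgraded G x)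
  exact fun S hS => hQP hS

theorem exists_mem_Qgraded_Estar_mulVec (hD : ∀ y, G.dist x y ≤ D)
    {p : Matrix X X ℂ} (hp : p ∈ Qalg G x D) (n : ℤ) :
    ∃ q ∈ Qgraded G x D n, ∀ j v, Estar G x j *ᵥ v = v →
      Estar G x (j + n) *ᵥ (p *ᵥ v) = q *ᵥ v := by
  refine Submodule.iSup_induction (Qgraded G x D)
    (motive := fun p => ∃ q ∈ Qgraded G x D n, ∀ j v, Estar G x j *ᵥ v = v →
      Estar G x (j + n) *ᵥ (p *ᵥ v) = q *ᵥ v) (Qalg_le_iSup_Qgraded G x hD hp)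
    (fun m a ha => ?_) ⟨0, zero_mem _, by simp⟩ fun a b ⟨qa, hqa, ha⟩ ⟨qb, hqb, hb⟩ =>
      ⟨qa + qb, add_mem hqa hqb, fun j v hv => by
        rw [add_mulVec, mulVec_add, ha j v hv, hb j v hv, add_mulVec]⟩
  have hcomm := Estar_mulVec_mulVec_of_mem_Tgraded G x (Submodule.mem_inf.1 ha).2
  by_cases h : m = n
  · subst h
    exact ⟨a, ha, fun j v hv => by rw [hcomm, hv]⟩
  · refine ⟨0, zero_mem _, fun j v hv => ?_⟩
    rw [← hv, ← hcomm, Estar_mulVec_Estar_mulVec, if_neg (by omega), zero_mulVec]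

theorem exists_mulVec_eq_of_isIrredMod (hD : ∀ y, G.dist x y ≤ D) {U : Submodule ℂ (X → ℂ)}
    (hU : IsIrredMod (Talg G x D) U) {w : X → ℂ} (hw : w ∈ U) (hw0 : w ≠ 0) {k : ℤ}
    (hk : Estar G x k *ᵥ w = w) {u : X → ℂ} (hu : u ∈ U) :
    ∃ p ∈ Qalg G x D, p *ᵥ w = u := by
  let N := (Subalgebra.toSubmodule (Qalg G x D)).map ((mulVecBilin ℂ ℂ).flip w)
  have hNU : N ≤ U := by
    rintro _ ⟨p, hp, rfl⟩
    exact hU.1 p (Qalg_le_Talg G x hD hp) w hw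
  have hNT : ∀ S ∈ Talg G x D, ∀ v ∈ N, S *ᵥ v ∈ N := by
    refine fun S hS => mulVec_mem_of_mem_adjoin ?_ hS
    rintro S (rfl | ⟨i, -, rfl⟩) _ ⟨p, hp, rfl⟩
    · exact ⟨adjMat G * p, (Qalg G x D).mul_mem (adjMat_mem_Qalg G x hD) hp,
        (mulVec_mulVec _ _ _).symm⟩
    · obtain ⟨q, hq, hpq⟩ := exists_mem_Qgraded_Estar_mulVec G x hD hp (i - k)
      refine ⟨q, (Submodule.mem_inf.1 hq).1, ?_⟩
      simpa using (hpq k w hk).symm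
  have hN0 : N ≠ ⊥ :=
    (Submodule.ne_bot_iff _).2 ⟨w, ⟨1, (Qalg G x D).one_mem, one_mulVec w⟩, hw0⟩
  obtain h | h := hU.2.2 N hNU hNT
  · exact absurd h hN0
  · obtain ⟨p, hp, rfl⟩ := h ▸ hu
    exact ⟨p, hp, rfl⟩

theorem exists_mem_Qgraded_mulVec_ne_zero (hD : ∀ y, G.dist x y ≤ D)
    {U : Submodule ℂ (X → ℂ)} (hU : IsIrredMod (Talg G x D) U) {w : X → ℂ} (hw : w ∈ U)
    (hw0 : w ≠ 0) {k : ℤ} (hk : Estar G x k *ᵥ w = w) {i : ℤ} (hi : Emap G x i U ≠ ⊥) :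
    ∃ q ∈ Qgraded G x D (i - k), q *ᵥ w ≠ 0 := by
  obtain ⟨_, ⟨u, hu, rfl⟩, hu0⟩ := (Submodule.ne_bot_iff _).1 hi
  obtain ⟨p, hp, rfl⟩ := exists_mulVec_eq_of_isIrredMod G x hD hU hw hw0 hk hu
  obtain ⟨q, hq, hpq⟩ := exists_mem_Qgraded_Estar_mulVec G x hD hp (i - k)
  refine ⟨q, hq, ?_⟩
  simpa [← hpq k w hk] using hu0

theorem Estar_mulVec_eq_self_iff (hD : ∀ y, G.dist x y ≤ D) {U : Submodule ℂ (X → ℂ)}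
    (hU : IsIrredMod (Talg G x D) U) {r : ℤ} (hr : IsEndpoint G x U r) {u : X → ℂ}
    (hu : u ∈ U) :
    Estar G x r *ᵥ u = u ↔ ∀ n < 0, ∀ q ∈ Qgraded G x D n, q *ᵥ u = 0 := by
  have hcomm {n : ℤ} {q : Matrix X X ℂ} (hq : q ∈ Qgraded G x D n) (j : ℤ) (v : X → ℂ) :
      Estar G x (j + n) *ᵥ (q *ᵥ v) = q *ᵥ (Estar G x j *ᵥ v) :=
    Estar_mulVec_mulVec_of_mem_Tgraded G x (Submodule.mem_inf.1 hq).2 j v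
  constructor
  · intro hur n hn q hq
    by_contra hqu
    have hne : Emap G x (r + n) U ≠ ⊥ := by
      refine (Submodule.ne_bot_iff _).2 ⟨_, ⟨q *ᵥ u, ?_, rfl⟩, ?_⟩
      · exact hU.1 q (Qalg_le_Talg G x hD (Submodule.mem_inf.1 hq).1) u hu
      · simpa [hcomm hq, hur] using hqu
    have hle := hr.2 _ hne
    omega
  · intro hneg
    by_contra hur
    obtain ⟨i, hi⟩ := exists_Estar_mulVec_ne_zero G x (sub_ne_zero.2 (Ne.symm hur))
    rw [mulVec_sub, Estar_mulVec_Estar_mulVec] at hi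
    have hir : i ≠ r := by rintro rfl; simp at hi
    rw [if_neg hir, sub_zero] at hi
    have hiU : Estar G x i *ᵥ u ∈ U := hU.1 _ (Estar_mem_Talg G x hD i) u hu
    have hri : r < i := lt_of_le_of_ne
      (hr.2 i ((Submodule.ne_bot_iff _).2 ⟨_, ⟨u, hu, rfl⟩, hi⟩)) (Ne.symm hir)
    obtain ⟨q, hq, hqu⟩ := exists_mem_Qgraded_mulVec_ne_zero G x hD hU hiU hi
      (by rw [Estar_mulVec_Estar_mulVec, if_pos rfl]) hr.1
    apply hqu
    rw [← hcomm hq, add_sub_cancel, hneg _ (by omega) q hq, mulVec_zero]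

theorem IsQIso.isQuasiIso (hD : ∀ y, G.dist x y ≤ D) {U W : Submodule ℂ (X → ℂ)}
    (hU : IsIrredMod (Talg G x D) U) (hW : IsIrredMod (Talg G x D) W) {r r' : ℤ}
    (hrU : IsEndpoint G x U r) (hrW : IsEndpoint G x W r') {σ : (X → ℂ) →ₗ[ℂ] (X → ℂ)}
    (hσ : IsQIso G x D U W σ) : IsQuasiIso G x D U W σ (r' - r) := by
  obtain ⟨hmap, hinj, hcomm⟩ := hσ
  obtain ⟨_, ⟨v, hv, rfl⟩, hu₀⟩ := (Submodule.ne_bot_iff _).1 hrU.1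
  set u₀ := Estar G x r *ᵥ v
  have hu₀U : u₀ ∈ U := hU.1 _ (Estar_mem_Talg G x hD r) v hv
  have hu₀r : Estar G x r *ᵥ u₀ = u₀ := by rw [Estar_mulVec_Estar_mulVec, if_pos rfl]
  have hσu₀W : σ u₀ ∈ W := hmap ▸ Submodule.mem_map_of_mem hu₀U
  have hσu₀r' : Estar G x r' *ᵥ σ u₀ = σ u₀ := by
    refine (Estar_mulVec_eq_self_iff G x hD hW hrW hσu₀W).2 fun n hn q hq => ?_
    rw [← hcomm q (Submodule.mem_inf.1 hq).1 u₀ hu₀U,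
      (Estar_mulVec_eq_self_iff G x hD hU hrU hu₀U).1 hu₀r n hn q hq, map_zero]
  refine ⟨hmap, hinj, hcomm _ (lowerM_mem_Qalg G x), hcomm _ (flatM_mem_Qalg G x),
    hcomm _ (raiseM_mem_Qalg G x), fun i u hu => ?_⟩
  obtain ⟨p, hp, rfl⟩ := exists_mulVec_eq_of_isIrredMod G x hD hU hu₀U hu₀ hu₀r hu
  obtain ⟨q, hq, hpq⟩ := exists_mem_Qgraded_Estar_mulVec G x hD hp (i - r)
  calc σ (Estar G x i *ᵥ (p *ᵥ u₀))
      = σ (q *ᵥ u₀) := by rw [← hpq r u₀ hu₀r, add_sub_cancel]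
    _ = q *ᵥ σ u₀ := hcomm q (Submodule.mem_inf.1 hq).1 u₀ hu₀U
    _ = Estar G x (i + (r' - r)) *ᵥ (p *ᵥ σ u₀) := by
      rw [← hpq r' _ hσu₀r', add_sub_left_comm]
    _ = Estar G x (i + (r' - r)) *ᵥ σ (p *ᵥ u₀) := by rw [hcomm p hp u₀ hu₀U]

theorem IsQuasiIso.isQIso {U W : Submodule ℂ (X → ℂ)}
    (hU : ∀ S ∈ Qalg G x D, ∀ u ∈ U, S *ᵥ u ∈ U) {σ : (X → ℂ) →ₗ[ℂ] (X → ℂ)} {n : ℤ}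
    (hσ : IsQuasiIso G x D U W σ n) : IsQIso G x D U W σ := by
  obtain ⟨hmap, hinj, hL, hF, hR, -⟩ := hσ
  refine ⟨hmap, hinj, fun S hS => map_mulVec_of_mem_adjoin σ hU ?_ hS⟩
  rintro S (rfl | rfl | rfl)
  exacts [hL, hF, hR]

end Terwilliger

theorem stmt17_general {X : Type*} [Fintype X] [DecidableEq X]
    (G : SimpleGraph X) [DecidableRel G.Adj] (x : X) (D : ℕ)
    (hD : ∀ y, G.dist x y ≤ D)
    (U W : Submodule ℂ (X → ℂ))
    (hU : IsIrredMod (Talg G x D) U) (hW : IsIrredMod (Talg G x D) W)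
    (r dU r' dW : ℕ)
    (hrU : HasEndpointDiam G x U r dU) (hrW : HasEndpointDiam G x W r' dW)
    (σ : (X → ℂ) →ₗ[ℂ] (X → ℂ)) :
    IsQIso G x D U W σ ↔ IsQuasiIso G x D U W σ ((r' : ℤ) - (r : ℤ)) :=
  ⟨IsQIso.isQuasiIso G x hD hU hW hrU.isEndpoint hrW.isEndpoint,
    IsQuasiIso.isQIso G x fun S hS => hU.1 S (Qalg_le_Talg G x hD hS)⟩

theorem stmt17 {X : Type*} [Fintype X] [DecidableEq X]
    (G : SimpleGraph X) [DecidableRel G.Adj] (hG : G.Connected) (x : X) (D : ℕ)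
    (hD : ∀ y, G.dist x y ≤ D) (hD2 : ∃ y, G.dist x y = D)
    (U W : Submodule ℂ (X → ℂ))
    (hU : IsIrredMod (Talg G x D) U) (hW : IsIrredMod (Talg G x D) W)
    (r dU r' dW : ℕ)
    (hrU : HasEndpointDiam G x U r dU) (hrW : HasEndpointDiam G x W r' dW)
    (σ : (X → ℂ) →ₗ[ℂ] (X → ℂ)) :
    IsQIso G x D U W σ ↔ IsQuasiIso G x D U W σ ((r' : ℤ) - (r : ℤ)) :=
  stmt17_general G x D hD U W hU hW r dU r' dW hrU hrW σ
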